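/- arXiv:2509.20746 — 3 statements merged into one kernel-verified Lean document; each statement's English description precedes it below -/
import Mathlib

section
/- Let 0 < ρ < 1 and κ > 1. Suppose f : ℂ → ℂ is analytic on the region {z ∈ ℂ : |z| > ρ}, satisfies Re f(z) > 0 for all |z| > ρ, f(z) → 1 as |z| → ∞, and f(1) = κ. Then ρ ≥ (κ − 1)/(κ + 1). -/
/-!
Invert the variable: `g w = f (1/w)`, with `g 0 = 1`, is holomorphic with positive real part on
the disc `‖w‖ < 1/ρ` (the singularity at `0` is removable because `f → 1` at infinity). Its
Cayley transform `(g - 1)/(g + 1)` maps that disc into the unit disc and vanishes at `0`, so by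
the Schwarz lemma its value `(κ - 1)/(κ + 1)` at `w = 1` has modulus at most `ρ`.
-/

open Metric Set Filter Complex
open scoped Topology

lemma add_one_ne_zero_of_re_pos {a : ℂ} (ha : 0 < a.re) : a + 1 ≠ 0 := by
  intro h
  have : (a + 1).re = 0 := by rw [h, zero_re]
  rw [add_re, one_re] at this
  linarith

lemma norm_cayley_lt_one {a : ℂ} (ha : 0 < a.re) : ‖(a - 1) / (a + 1)‖ < 1 := by
  rw [norm_div, div_lt_one (norm_pos_iff.mpr (add_one_ne_zero_of_re_pos ha))]
  have hsq : ‖a - 1‖ ^ 2 < ‖a + 1‖ ^ 2 := by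
    rw [Complex.sq_norm, Complex.sq_norm, normSq_apply, normSq_apply]
    simp only [add_re, add_im, sub_re, sub_im, one_re, one_im]
    nlinarith
  exact lt_of_pow_lt_pow_left₀ 2 (norm_nonneg _) hsq

lemma norm_cayley_le_of_re_pos {g : ℂ → ℂ} {R : ℝ} (hg : DifferentiableOn ℂ g (ball 0 R))
    (hg_re : ∀ w ∈ ball (0 : ℂ) R, 0 < (g w).re) (hg0 : g 0 = 1) {z : ℂ}
    (hz : z ∈ ball 0 R) :
    ‖(g z - 1) / (g z + 1)‖ ≤ ‖z‖ / R := by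
  set φ : ℂ → ℂ := fun w => (g w - 1) / (g w + 1)
  have hφ : DifferentiableOn ℂ φ (ball 0 R) :=
    (hg.sub_const 1).div (hg.add_const 1) fun w hw => add_one_ne_zero_of_re_pos (hg_re w hw)
  have hφ0 : φ 0 = 0 := by simp [φ, hg0]
  have hmaps : MapsTo φ (ball 0 R) (closedBall (φ 0) 1) := fun w hw => by
    rw [hφ0, mem_closedBall_zero_iff]
    exact (norm_cayley_lt_one (hg_re w hw)).le
  have := dist_le_div_mul_dist_of_mapsTo_ball hφ hmaps hz
  rwa [hφ0, dist_zero_right, dist_zero_right, div_mul_eq_mul_div, one_mul] at this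

lemma lt_norm_inv_of_mem_ball {ρ : ℝ} (hρ : 0 < ρ) {w : ℂ} (hw0 : w ≠ 0)
    (hw : w ∈ ball (0 : ℂ) ρ⁻¹) : ρ < ‖w⁻¹‖ := by
  rw [mem_ball_zero_iff] at hw
  rwa [norm_inv, lt_inv_comm₀ hρ (norm_pos_iff.mpr hw0)]

lemma differentiableOn_update_inv_of_tendsto_cobounded {f : ℂ → ℂ} {ρ : ℝ} {c : ℂ}
    (hρ : 0 < ρ) (hf : DifferentiableOn ℂ f {z | ρ < ‖z‖})
    (hlim : Tendsto f (Bornology.cobounded ℂ) (𝓝 c)) :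
    DifferentiableOn ℂ (Function.update (fun w => f w⁻¹) 0 c) (ball 0 ρ⁻¹) := by
  set g := Function.update (fun w => f w⁻¹) 0 c
  have hg_eq : ∀ w ≠ 0, g w = f w⁻¹ := fun w hw => Function.update_of_ne hw _ _
  refine (differentiableOn_compl_singleton_and_continuousAt_iff
    (ball_mem_nhds _ (inv_pos.mpr hρ))).mp ⟨?_, ?_⟩
  · intro w ⟨hw, hw0⟩
    have hfw : DifferentiableAt ℂ (fun w => f w⁻¹) w :=
      ((hf.differentiableAt (isOpen_lt continuous_const continuous_norm |>.mem_nhds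
        (lt_norm_inv_of_mem_ball hρ hw0 hw))).comp w (differentiableAt_inv hw0))
    refine (hfw.congr_of_eventuallyEq ?_).differentiableWithinAt
    filter_upwards [isOpen_compl_singleton.mem_nhds hw0] with x hx using hg_eq x hx
  · rw [← continuousWithinAt_compl_self, ContinuousWithinAt,
      show g 0 = c from Function.update_self _ _ _]
    refine (hlim.comp tendsto_inv₀_nhdsNE_zero).congr' ?_
    filter_upwards [self_mem_nhdsWithin] with x hx using (hg_eq x hx).symm

/-- Necessity direction of Lemma 2: strict positive realness on `{|z| > ρ}`, limit `1`
at infinity, and the interpolation condition `f(1) = κ` force `ρ ≥ (κ-1)/(κ+1)`. -/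
theorem stmt_3 (ρ κ : ℝ) (hρ0 : 0 < ρ) (hρ1 : ρ < 1) (hκ : 1 < κ)
    (f : ℂ → ℂ)
    (hana : AnalyticOnNhd ℂ f {z : ℂ | ρ < ‖z‖})
    (hre : ∀ z : ℂ, ρ < ‖z‖ → 0 < (f z).re)
    (hlim : Filter.Tendsto f (Filter.comap (fun z : ℂ => ‖z‖) Filter.atTop) (nhds 1))
    (hint : f 1 = (κ : ℂ)) :
    (κ - 1) / (κ + 1) ≤ ρ := by
  set g := Function.update (fun w : ℂ => f w⁻¹) 0 1
  have hg : DifferentiableOn ℂ g (ball 0 ρ⁻¹) :=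
    differentiableOn_update_inv_of_tendsto_cobounded hρ0 hana.differentiableOn
      (by rwa [← comap_norm_atTop])
  have hg_re : ∀ w ∈ ball (0 : ℂ) ρ⁻¹, 0 < (g w).re := by
    intro w hw
    rcases eq_or_ne w 0 with rfl | hw0
    · simp [g]
    · simpa [g, hw0] using hre _ (lt_norm_inv_of_mem_ball hρ0 hw0 hw)
  have h1 : (1 : ℂ) ∈ ball 0 ρ⁻¹ := by simpa using (one_lt_inv₀ hρ0).2 hρ1
  have hbound := norm_cayley_le_of_re_pos hg hg_re (by simp [g]) h1
  have hg1 : g 1 = κ := by simp [g, hint]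
  calc (κ - 1) / (κ + 1) = ‖(g 1 - 1) / (g 1 + 1)‖ := by
        rw [hg1, ← ofReal_one, ← ofReal_sub, ← ofReal_add, ← ofReal_div, norm_real,
          Real.norm_of_nonneg (div_nonneg (by linarith) (by linarith))]
    _ ≤ ‖(1 : ℂ)‖ / ρ⁻¹ := hbound
    _ = ρ := by simp
end

section
/- Let κ > 1 and set ρ = (κ − 1)/(κ + 1). Suppose f : ℂ → ℂ is analytic on {z ∈ ℂ : |z| > ρ}, satisfies Re f(z) > 0 for all |z| > ρ, f(z) → 1 as |z| → ∞, and f(1) = κ. Then f(z) = (z + ρ)/(z − ρ) for all |z| > ρ; i.e., the interpolant at the critical value ρ = (κ−1)/(κ+1) is unique. -/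
/-!
The Cayley transform `h = (f - 1) / (f + 1)` maps `{ρ < ‖z‖}` into the unit disc and tends to `0`
at infinity, and `f 1 = κ` says `h 1 = ρ`. Hence `φ w = h (ρ / w)`, extended by `φ 0 = 0`, is a
holomorphic self-map of the unit disc fixing both `0` and `ρ`; by the equality case of the Schwarz
lemma `φ = id`, i.e. `h z = ρ / z`, and solving for `f` gives `f z = (z + ρ) / (z - ρ)`.
-/

open Metric Set Filter Topology Bornology Function

lemma add_one_ne_zero_of_re_pos_s5 {w : ℂ} (hw : 0 < w.re) : w + 1 ≠ 0 := by
  intro h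
  have := congrArg Complex.re h
  simp only [Complex.add_re, Complex.one_re, Complex.zero_re] at this
  linarith

lemma norm_sub_one_div_add_one_lt_one {w : ℂ} (hw : 0 < w.re) : ‖(w - 1) / (w + 1)‖ < 1 := by
  rw [norm_div, div_lt_one (norm_pos_iff.mpr (add_one_ne_zero_of_re_pos_s5 hw)),
    ← sq_lt_sq₀ (norm_nonneg _) (norm_nonneg _), Complex.sq_norm, Complex.sq_norm,
    Complex.normSq_apply, Complex.normSq_apply]
  simp only [Complex.sub_re, Complex.sub_im, Complex.add_re, Complex.add_im,
    Complex.one_re, Complex.one_im]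
  nlinarith

lemma eq_add_div_sub_of_sub_one_div_add_one_eq {w z c : ℂ} (hw : w + 1 ≠ 0) (hz : z ≠ 0)
    (hzc : z ≠ c) (h : (w - 1) / (w + 1) = c / z) : w = (z + c) / (z - c) := by
  rw [div_eq_div_iff hw hz] at h
  rw [eq_div_iff (sub_ne_zero.mpr hzc)]
  linear_combination h

namespace Complex

variable {E : Type*} [NormedAddCommGroup E] [NormedSpace ℂ E] [CompleteSpace E]

theorem differentiableOn_update_of_tendsto {g : ℂ → E} {s : Set ℂ} {c : ℂ} {y : E}
    (hs : s ∈ 𝓝 c) (hd : DifferentiableOn ℂ g (s \ {c})) (hy : Tendsto g (𝓝[≠] c) (𝓝 y)) :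
    DifferentiableOn ℂ (update g c y) s := by
  refine (differentiableOn_compl_singleton_and_continuousAt_iff hs).mp ⟨?_, ?_⟩
  · exact hd.congr fun z hz => update_of_ne (notMem_singleton_iff.mp hz.2) _ _
  · exact continuousAt_update_same.mpr hy

theorem eqOn_id_of_mapsTo_ball_of_isFixedPt {g : ℂ → ℂ} {R : ℝ} {a : ℂ}
    (hd : DifferentiableOn ℂ g (ball 0 R)) (hmaps : MapsTo g (ball 0 R) (ball 0 R))
    (h₀ : IsFixedPt g 0) (ha : a ∈ ball 0 R) (ha₀ : a ≠ 0) (hga : IsFixedPt g a) :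
    EqOn g id (ball 0 R) := by
  have hR : 0 < R := pos_of_mem_ball ha
  have hslope : dslope g 0 a = 1 := by
    rw [dslope_of_ne _ ha₀, slope_def_field, hga.eq, h₀.eq, sub_zero, div_self ha₀]
  intro z hz
  have := affine_of_mapsTo_ball_of_norm_dslope_eq_div hd
    (hmaps.mono_right (by rw [h₀.eq]; exact ball_subset_closedBall)) ha
    (by simp [hslope, hR.ne']) hz
  simpa [h₀.eq, hslope] using this

end Complex

lemma mapsTo_ofReal_div_ball_diff_zero {r : ℝ} (hr : 0 < r) :
    MapsTo (fun w : ℂ => r / w) (ball 0 1 \ {0}) {z | r < ‖z‖} := by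
  rintro w ⟨hw, hw₀ : w ≠ 0⟩
  rw [mem_ball_zero_iff] at hw
  show r < ‖(r : ℂ) / w‖
  rw [norm_div, Complex.norm_of_nonneg hr.le, lt_div_iff₀ (norm_pos_iff.mpr hw₀)]
  nlinarith

lemma ofReal_div_mem_ball_diff_zero {r : ℝ} (hr : 0 < r) {z : ℂ} (hz : r < ‖z‖) :
    (r : ℂ) / z ∈ ball (0 : ℂ) 1 \ {0} := by
  have hz₀ : z ≠ 0 := norm_pos_iff.mp (hr.trans hz)
  refine ⟨?_, div_ne_zero (Complex.ofReal_ne_zero.mpr hr.ne') hz₀⟩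
  rw [mem_ball_zero_iff, norm_div, Complex.norm_of_nonneg hr.le, div_lt_one (hr.trans hz)]
  exact hz

theorem eq_ofReal_div_of_mapsTo_ball_of_tendsto_cobounded {g : ℂ → ℂ} {r : ℝ} {z₀ : ℂ}
    (hr : 0 < r) (hd : DifferentiableOn ℂ g {z | r < ‖z‖})
    (hmaps : MapsTo g {z | r < ‖z‖} (ball 0 1)) (hlim : Tendsto g (cobounded ℂ) (𝓝 0))
    (hz₀ : r < ‖z₀‖) (hgz₀ : g z₀ = r / z₀) :
    ∀ z : ℂ, r < ‖z‖ → g z = r / z := by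
  have hr' : (r : ℂ) ≠ 0 := Complex.ofReal_ne_zero.mpr hr.ne'
  have hinv : MapsTo (fun w : ℂ => r / w) (ball 0 1 \ {0}) {z | r < ‖z‖} :=
    mapsTo_ofReal_div_ball_diff_zero hr
  set φ : ℂ → ℂ := update (fun w => g (r / w)) 0 0
  have hφ : ∀ w ≠ 0, φ w = g (r / w) := fun w hw => update_of_ne hw _ _
  have hφ_diff : DifferentiableOn ℂ φ (ball 0 1) := by
    refine Complex.differentiableOn_update_of_tendsto (ball_mem_nhds _ one_pos) ?_ ?_
    · refine hd.comp (fun w hw => ?_) hinv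
      exact ((differentiableAt_const _).div differentiableAt_id
        (notMem_singleton_iff.mp hw.2)).differentiableWithinAt
    · exact hlim.comp ((tendsto_mul_left_cobounded hr').comp tendsto_inv₀_nhdsNE_zero)
  have hφ_maps : MapsTo φ (ball 0 1) (ball 0 1) := by
    intro w hw
    rcases eq_or_ne w 0 with rfl | hw₀
    · simp [φ]
    · rw [hφ w hw₀]
      exact hmaps (hinv ⟨hw, hw₀⟩)
  have hφ_div : ∀ z, r < ‖z‖ → φ (r / z) = g z := fun z hz => by
    rw [hφ _ (ofReal_div_mem_ball_diff_zero hr hz).2, div_div_cancel₀ hr']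
  have hid := Complex.eqOn_id_of_mapsTo_ball_of_isFixedPt hφ_diff hφ_maps (by simp [φ, IsFixedPt])
    (ofReal_div_mem_ball_diff_zero hr hz₀).1 (ofReal_div_mem_ball_diff_zero hr hz₀).2
    (by rw [IsFixedPt, hφ_div z₀ hz₀, hgz₀])
  intro z hz
  rw [← hφ_div z hz]
  exact hid (ofReal_div_mem_ball_diff_zero hr hz).1

/-- Uniqueness in Lemma 2: at the critical value `ρ = (κ-1)/(κ+1)`, any function analytic
on `{|z| > ρ}` with positive real part there, limit `1` at infinity, and `f(1) = κ` must
equal `(z+ρ)/(z-ρ)` on `{|z| > ρ}`. -/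
theorem stmt_5 (κ ρ : ℝ) (hκ : 1 < κ) (hρ : ρ = (κ - 1) / (κ + 1))
    (f : ℂ → ℂ)
    (hana : AnalyticOnNhd ℂ f {z : ℂ | ρ < ‖z‖})
    (hre : ∀ z : ℂ, ρ < ‖z‖ → 0 < (f z).re)
    (hlim : Filter.Tendsto f (Filter.comap (fun z : ℂ => ‖z‖) Filter.atTop) (nhds 1))
    (hint : f 1 = (κ : ℂ)) :
    ∀ z : ℂ, ρ < ‖z‖ → f z = (z + (ρ : ℂ)) / (z - (ρ : ℂ)) := by
  have hρ₀ : 0 < ρ := hρ ▸ div_pos (by linarith) (by linarith)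
  have hρ₁ : ρ < 1 := by rw [hρ, div_lt_one (by linarith)]; linarith
  have hden : ∀ z : ℂ, ρ < ‖z‖ → f z + 1 ≠ 0 := fun z hz => add_one_ne_zero_of_re_pos_s5 (hre z hz)
  have hcayley : ∀ z : ℂ, ρ < ‖z‖ → (f z - 1) / (f z + 1) = ρ / z := by
    refine eq_ofReal_div_of_mapsTo_ball_of_tendsto_cobounded hρ₀
      (fun z hz => ?_) (fun z hz => ?_) ?_ (z₀ := 1) (by simpa using hρ₁) ?_
    · have hf := (hana z hz).differentiableAt
      exact ((hf.sub_const 1).div (hf.add_const 1) (hden z hz)).differentiableWithinAt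
    · exact mem_ball_zero_iff.mpr (norm_sub_one_div_add_one_lt_one (hre z hz))
    · rw [comap_norm_atTop] at hlim
      simpa [Pi.div_def] using (hlim.sub_const 1).div (hlim.add_const 1) (by norm_num)
    · rw [hint, hρ]
      push_cast
      simp
  intro z hz
  have hz₀ : z ≠ 0 := norm_pos_iff.mp (hρ₀.trans hz)
  refine eq_add_div_sub_of_sub_one_div_add_one_eq (hden z hz) hz₀ ?_ (hcayley z hz)
  rintro rfl
  simp [abs_of_pos hρ₀] at hz
end

section
/- For all real κ_f ≥ 1 and κ_E > 1, the synthesized rate is strictly smaller than the GDA rate: 1 − 2/(κ_f + 1) < sqrt( 1 − (1/κ_f)(1/κ_E − 1/κ_E²) ). (Equivalently, 4 κ_f² κ_E² > (κ_E − 1)(κ_f + 1)².) -/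
/-! Squaring both sides, `ρ_syn² = 1 - 4κ_f/(κ_f + 1)²` and `ρ_gda² = 1 - (κ_E - 1)/(κ_f κ_E²)`, so the
claim reduces to `(κ_E - 1)(κ_f + 1)² < 4κ_f²κ_E²`. This follows from `(κ_f + 1)² ≤ 4κ_f²` (as `κ_f ≥ 1`)
and `κ_E - 1 < κ_E²`. -/

lemma sub_one_mul_add_one_sq_lt {a b : ℝ} (ha : 1 ≤ a) (hb : 1 < b) :
    (b - 1) * (a + 1) ^ 2 < 4 * a ^ 2 * b ^ 2 := by
  have hsq : (a + 1) ^ 2 ≤ 4 * a ^ 2 := by nlinarith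
  have hb' : b - 1 < b ^ 2 := by nlinarith
  calc (b - 1) * (a + 1) ^ 2 ≤ (b - 1) * (4 * a ^ 2) := by gcongr
    _ < b ^ 2 * (4 * a ^ 2) := by gcongr
    _ = 4 * a ^ 2 * b ^ 2 := by ring

lemma one_sub_two_div_add_one_sq {a : ℝ} (ha : a + 1 ≠ 0) :
    (1 - 2 / (a + 1)) ^ 2 = 1 - 4 * a / (a + 1) ^ 2 := by
  field_simp
  ring

lemma one_div_mul_one_div_sub_one_div_sq {a b : ℝ} (ha : a ≠ 0) (hb : b ≠ 0) :
    1 / a * (1 / b - 1 / b ^ 2) = (b - 1) / (a * b ^ 2) := by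
  field_simp

/-- The synthesized rate `ρ_syn = 1 - 2/(κ_f + 1)` is strictly smaller than the GDA rate
`ρ_gda = sqrt(1 - (1/κ_f)(1/κ_E - 1/κ_E²))` for all `κ_f ≥ 1` and `κ_E > 1`. -/
theorem stmt_11 (κf κE : ℝ) (hκf : 1 ≤ κf) (hκE : 1 < κE) :
    1 - 2 / (κf + 1) <
      Real.sqrt (1 - (1 / κf) * (1 / κE - 1 / κE ^ 2)) := by
  have hf : 0 < κf := by linarith
  have hE : 0 < κE := by linarith
  have hρ : 0 ≤ 1 - 2 / (κf + 1) := by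
    rw [sub_nonneg, div_le_one (by linarith)]
    linarith
  rw [Real.lt_sqrt hρ, one_sub_two_div_add_one_sq (by linarith),
    one_div_mul_one_div_sub_one_div_sq hf.ne' hE.ne']
  gcongr 1 - ?_
  rw [div_lt_div_iff₀ (by positivity) (by positivity)]
  linarith [sub_one_mul_add_one_sq_lt hκf hκE]
end
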